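/- Let v : ℝⁿ → ℝ be semiconcave with constant C and suppose v is a viscosity solution of (1/2)⟨A(x)Dv, Dv⟩ + V(x) = E with E > sup V, A symmetric positive definite and continuous, V continuous. If x : [0,τ] → ℝⁿ is a Lipschitz arc such that for a.e. s the derivative ẋ(s) lies in A(x(s))·D⁺v(x(s)), and v is differentiable at x(s) for a.e. s ∈ [0,τ], then v(x(τ)) - v(x(0)) = ∫₀^τ 2(E - V(x(σ))) dσ ≥ 2μτ, where μ = E - sup V > 0. -/

import Mathlib

/-!
Where `v` is differentiable, its superdifferential reduces to the gradient, which also lies in the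
subdifferential, so the two viscosity inequalities combine to `⟪A ∇v, ∇v⟫ = 2 (E - V)`; by the
chain rule `(v ∘ γ)' = ⟪∇v, A ∇v⟫ = 2 (E - V ∘ γ)` almost everywhere. A `C`-semiconcave function is
`C/2 ‖x‖²` plus a concave function, hence locally Lipschitz, so `v ∘ γ` is absolutely continuous
and is the integral of its derivative. The lower bound is `V ≤ sup V` under the integral.
-/

open RealInnerProductSpace
open Set MeasureTheory

/-- The (Dini) superdifferential of `v` at `x`. -/
def superdiff {n : ℕ} (v : EuclideanSpace ℝ (Fin n) → ℝ)
    (x : EuclideanSpace ℝ (Fin n)) : Set (EuclideanSpace ℝ (Fin n)) :=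
  {p | ∀ ε > 0, ∃ δ > 0, ∀ y, ‖y - x‖ < δ → v y - v x - ⟪p, y - x⟫ ≤ ε * ‖y - x‖}

/-- The (Dini) subdifferential of `v` at `x`. -/
def subdiff {n : ℕ} (v : EuclideanSpace ℝ (Fin n) → ℝ)
    (x : EuclideanSpace ℝ (Fin n)) : Set (EuclideanSpace ℝ (Fin n)) :=
  {p | ∀ ε > 0, ∃ δ > 0, ∀ y, ‖y - x‖ < δ → v y - v x - ⟪p, y - x⟫ ≥ -(ε * ‖y - x‖)}

section Semiconcave

variable {F : Type*} [NormedAddCommGroup F] [InnerProductSpace ℝ F] {v : F → ℝ} {C m : ℝ}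

lemma strongConcaveOn_univ_neg_of_semiconcave
    (hsc : ∀ x y : F, ∀ lam ∈ Icc (0 : ℝ) 1,
      lam * v x + (1 - lam) * v y - v (lam • x + (1 - lam) • y)
        ≤ C / 2 * lam * (1 - lam) * ‖x - y‖ ^ 2) :
    StrongConcaveOn univ (-C) v := by
  refine ⟨convex_univ, fun x _ y _ a b ha hb hab => ?_⟩
  obtain rfl : b = 1 - a := by linarith
  have := hsc x y a ⟨ha, by linarith⟩
  simp only [smul_eq_mul]
  linarith

lemma StrongConcaveOn.locallyLipschitz [FiniteDimensional ℝ F] (hv : StrongConcaveOn univ m v) :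
    LocallyLipschitz v := by
  have hconc : ConcaveOn ℝ univ fun x => v x + m / 2 * ‖x‖ ^ 2 :=
    strongConcaveOn_iff_convex.mp hv
  have hquad : LocallyLipschitz fun x : F => m / 2 * ‖x‖ ^ 2 :=
    ((contDiff_norm_sq ℝ).const_smul (m / 2)).locallyLipschitz
  simpa using hconc.locallyLipschitz.sub hquad

end Semiconcave

lemma eq_zero_of_forall_inner_le_mul_norm {F : Type*} [NormedAddCommGroup F]
    [InnerProductSpace ℝ F] {w : F}
    (hw : ∀ ε > 0, ∃ δ > 0, ∀ y : F, ‖y‖ < δ → ⟪w, y⟫ ≤ ε * ‖y‖) : w = 0 := by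
  by_contra hne
  have hpos : 0 < ‖w‖ := norm_pos_iff.mpr hne
  obtain ⟨δ, hδ, hle⟩ := hw (‖w‖ / 2) (by positivity)
  obtain ⟨t, ht, htw⟩ : ∃ t > 0, t * ‖w‖ = δ / 2 := ⟨δ / (2 * ‖w‖), by positivity, by field_simp⟩
  have hnorm : ‖t • w‖ = t * ‖w‖ := by rw [norm_smul, Real.norm_of_nonneg ht.le]
  have := hle (t • w) (by linarith)
  rw [real_inner_smul_right, real_inner_self_eq_norm_sq, hnorm] at this
  nlinarith [mul_pos ht (mul_pos hpos hpos)]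

section Superdifferential

variable {n : ℕ} {v : EuclideanSpace ℝ (Fin n) → ℝ} {x p q : EuclideanSpace ℝ (Fin n)}

lemma HasGradientAt.exists_abs_sub_inner_le (h : HasGradientAt v p x) {ε : ℝ} (hε : 0 < ε) :
    ∃ δ > 0, ∀ y, ‖y - x‖ < δ → |v y - v x - ⟪p, y - x⟫| ≤ ε * ‖y - x‖ := by
  obtain ⟨δ, hδ, hy⟩ := Metric.eventually_nhds_iff.mp ((hasGradientAt_iff_isLittleO.mp h).def hε)
  exact ⟨δ, hδ, fun y hyx => by simpa using hy (by rwa [dist_eq_norm])⟩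

lemma HasGradientAt.mem_superdiff (h : HasGradientAt v p x) : p ∈ superdiff v x := fun _ hε =>
  let ⟨δ, hδ, hy⟩ := h.exists_abs_sub_inner_le hε
  ⟨δ, hδ, fun y hyx => (le_abs_self _).trans (hy y hyx)⟩

lemma HasGradientAt.mem_subdiff (h : HasGradientAt v p x) : p ∈ subdiff v x := fun _ hε =>
  let ⟨δ, hδ, hy⟩ := h.exists_abs_sub_inner_le hε
  ⟨δ, hδ, fun y hyx => neg_le_of_abs_le (hy y hyx)⟩

lemma eq_of_mem_superdiff_of_mem_subdiff (hp : p ∈ superdiff v x) (hq : q ∈ subdiff v x) :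
    p = q := by
  refine (sub_eq_zero.mp (eq_zero_of_forall_inner_le_mul_norm fun ε hε => ?_)).symm
  obtain ⟨δ₁, hδ₁, hsup⟩ := hp (ε / 2) (half_pos hε)
  obtain ⟨δ₂, hδ₂, hsub⟩ := hq (ε / 2) (half_pos hε)
  refine ⟨min δ₁ δ₂, lt_min hδ₁ hδ₂, fun y hy => ?_⟩
  have h₁ := hsup (x + y) (by simpa using hy.trans_le (min_le_left _ _))
  have h₂ := hsub (x + y) (by simpa using hy.trans_le (min_le_right _ _))
  simp only [add_sub_cancel_left] at h₁ h₂
  rw [inner_sub_left]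
  linarith

end Superdifferential

lemma LocallyLipschitz.absolutelyContinuousOnInterval_comp {X Y : Type*} [PseudoMetricSpace X]
    [PseudoMetricSpace Y] {f : X → Y} (hf : LocallyLipschitz f) {γ : ℝ → X} {L : NNReal}
    {a b : ℝ} (hγ : LipschitzOnWith L γ (uIcc a b)) :
    AbsolutelyContinuousOnInterval (f ∘ γ) a b := by
  obtain ⟨K, hK⟩ := hf.locallyLipschitzOn.exists_lipschitzOnWith_of_compact
    (isCompact_uIcc.image_of_continuousOn hγ.continuousOn)
  exact (hK.comp hγ (mapsTo_image γ _)).absolutelyContinuousOnInterval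

section Characteristic

variable {n : ℕ}
  {A : EuclideanSpace ℝ (Fin n) → EuclideanSpace ℝ (Fin n) →L[ℝ] EuclideanSpace ℝ (Fin n)}
  {V v : EuclideanSpace ℝ (Fin n) → ℝ} {E : ℝ}

def IsViscositySolution
    (A : EuclideanSpace ℝ (Fin n) → EuclideanSpace ℝ (Fin n) →L[ℝ] EuclideanSpace ℝ (Fin n))
    (V : EuclideanSpace ℝ (Fin n) → ℝ) (E : ℝ) (v : EuclideanSpace ℝ (Fin n) → ℝ) : Prop :=
  (∀ x, ∀ p ∈ superdiff v x, 1 / 2 * ⟪A x p, p⟫ + V x ≤ E) ∧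
    ∀ x, ∀ p ∈ subdiff v x, 1 / 2 * ⟪A x p, p⟫ + V x ≥ E

lemma IsViscositySolution.inner_gradient_eq (hv : IsViscositySolution A V E v)
    {x : EuclideanSpace ℝ (Fin n)} (hx : DifferentiableAt ℝ v x) :
    ⟪A x (gradient v x), gradient v x⟫ = 2 * (E - V x) := by
  have hle := hv.1 x _ hx.hasGradientAt.mem_superdiff
  have hge := hv.2 x _ hx.hasGradientAt.mem_subdiff
  linarith

lemma IsViscositySolution.hasDerivAt_comp (hv : IsViscositySolution A V E v)
    {γ : ℝ → EuclideanSpace ℝ (Fin n)} {s : ℝ} {p : EuclideanSpace ℝ (Fin n)}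
    (hdiff : DifferentiableAt ℝ v (γ s)) (hp : p ∈ superdiff v (γ s))
    (hγ : HasDerivAt γ (A (γ s) p) s) :
    HasDerivAt (v ∘ γ) (2 * (E - V (γ s))) s := by
  have hgrad := hdiff.hasGradientAt
  obtain rfl := eq_of_mem_superdiff_of_mem_subdiff hp hgrad.mem_subdiff
  have := (hasGradientAt_iff_hasFDerivAt.mp hgrad).comp_hasDerivAt s hγ
  rwa [InnerProductSpace.toDual_apply_apply, real_inner_comm, hv.inner_gradient_eq hdiff] at this

end Characteristic

theorem energy_growth_along_characteristic_general {n : ℕ}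
    (A : EuclideanSpace ℝ (Fin n) → EuclideanSpace ℝ (Fin n) →L[ℝ] EuclideanSpace ℝ (Fin n))
    (V : EuclideanSpace ℝ (Fin n) → ℝ) (E : ℝ)
    (hVbdd : BddAbove (Set.range V))
    (v : EuclideanSpace ℝ (Fin n) → ℝ) (C : ℝ)
    (hsc : ∀ x y : EuclideanSpace ℝ (Fin n), ∀ lam ∈ Icc (0 : ℝ) 1,
      lam * v x + (1 - lam) * v y - v (lam • x + (1 - lam) • y)
        ≤ C / 2 * lam * (1 - lam) * ‖x - y‖ ^ 2)
    (hsubsol : ∀ x, ∀ p ∈ superdiff v x, 1 / 2 * ⟪A x p, p⟫ + V x ≤ E)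
    (hsupsol : ∀ x, ∀ p ∈ subdiff v x, 1 / 2 * ⟪A x p, p⟫ + V x ≥ E)
    (τ : ℝ) (hτ : 0 ≤ τ)
    (γ : ℝ → EuclideanSpace ℝ (Fin n)) (L : NNReal)
    (hLip : LipschitzOnWith L γ (Icc 0 τ))
    (hae : ∀ᵐ s ∂(volume.restrict (Icc 0 τ)),
      DifferentiableAt ℝ v (γ s) ∧
      ∃ p ∈ superdiff v (γ s), HasDerivAt γ (A (γ s) p) s) :
    v (γ τ) - v (γ 0) = ∫ s in (0 : ℝ)..τ, 2 * (E - V (γ s)) ∧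
    v (γ τ) - v (γ 0) ≥ 2 * (E - sSup (Set.range V)) * τ := by
  have hv : IsViscositySolution A V E v := ⟨hsubsol, hsupsol⟩
  have hac : AbsolutelyContinuousOnInterval (v ∘ γ) 0 τ :=
    (strongConcaveOn_univ_neg_of_semiconcave hsc).locallyLipschitz
      |>.absolutelyContinuousOnInterval_comp (by rwa [uIcc_of_le hτ])
  have hderiv : deriv (v ∘ γ) =ᵐ[volume.restrict (uIoc 0 τ)] fun s => 2 * (E - V (γ s)) := by
    rw [uIoc_of_le hτ]
    filter_upwards [ae_restrict_of_ae_restrict_of_subset Ioc_subset_Icc_self hae]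
      with s ⟨hdiff, p, hp, hγ⟩
    exact (hv.hasDerivAt_comp hdiff hp hγ).deriv
  have heq : v (γ τ) - v (γ 0) = ∫ s in (0 : ℝ)..τ, 2 * (E - V (γ s)) :=
    hac.integral_deriv_eq_sub.symm.trans (intervalIntegral.integral_congr_ae_restrict hderiv)
  refine ⟨heq, heq ▸ ?_⟩
  calc 2 * (E - sSup (range V)) * τ = ∫ _ in (0 : ℝ)..τ, 2 * (E - sSup (range V)) := by
        simp only [intervalIntegral.integral_const, sub_zero, smul_eq_mul, mul_comm]
    _ ≤ ∫ s in (0 : ℝ)..τ, 2 * (E - V (γ s)) :=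
        intervalIntegral.integral_mono_on hτ intervalIntegrable_const
          (hac.intervalIntegrable_deriv.congr_ae hderiv) fun s _ => by
            linarith [le_csSup hVbdd (mem_range_self (γ s))]

/-- Along a generalized characteristic arc of a semiconcave viscosity solution of
`(1/2)⟪A(x)Dv, Dv⟫ + V(x) = E` with `E > sup V`, along which `v` is differentiable a.e.,
one has `v(x(τ)) - v(x(0)) = ∫₀^τ 2(E - V(x(σ))) dσ ≥ 2μτ` with `μ = E - sup V > 0`. -/
theorem energy_growth_along_characteristic {n : ℕ}
    (A : EuclideanSpace ℝ (Fin n) → EuclideanSpace ℝ (Fin n) →L[ℝ] EuclideanSpace ℝ (Fin n))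
    (hAcont : Continuous A)
    (hAsymm : ∀ x p q, ⟪A x p, q⟫ = ⟪p, A x q⟫)
    (hApos : ∀ x p, p ≠ 0 → 0 < ⟪A x p, p⟫)
    (V : EuclideanSpace ℝ (Fin n) → ℝ) (hV : Continuous V) (E : ℝ)
    (hVbdd : BddAbove (Set.range V)) (henergy : sSup (Set.range V) < E)
    (v : EuclideanSpace ℝ (Fin n) → ℝ) (C : ℝ)
    (hsc : ∀ x y : EuclideanSpace ℝ (Fin n), ∀ lam ∈ Icc (0 : ℝ) 1,
      lam * v x + (1 - lam) * v y - v (lam • x + (1 - lam) • y)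
        ≤ C / 2 * lam * (1 - lam) * ‖x - y‖ ^ 2)
    (hsubsol : ∀ x, ∀ p ∈ superdiff v x, 1 / 2 * ⟪A x p, p⟫ + V x ≤ E)
    (hsupsol : ∀ x, ∀ p ∈ subdiff v x, 1 / 2 * ⟪A x p, p⟫ + V x ≥ E)
    (τ : ℝ) (hτ : 0 ≤ τ)
    (γ : ℝ → EuclideanSpace ℝ (Fin n)) (L : NNReal)
    (hLip : LipschitzOnWith L γ (Icc 0 τ))
    (hae : ∀ᵐ s ∂(volume.restrict (Icc 0 τ)),
      DifferentiableAt ℝ v (γ s) ∧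
      ∃ p ∈ superdiff v (γ s), HasDerivAt γ (A (γ s) p) s) :
    v (γ τ) - v (γ 0) = ∫ s in (0 : ℝ)..τ, 2 * (E - V (γ s)) ∧
    v (γ τ) - v (γ 0) ≥ 2 * (E - sSup (Set.range V)) * τ :=
  energy_growth_along_characteristic_general A V E hVbdd v C hsc hsubsol hsupsol τ hτ γ L hLip hae
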